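/- For n ∈ ℕ, nonnegative reals α, β, k with 0 ≤ α ≤ β, and x ∈ [0,1], K_n^{(α,β,k)}(e₂;x) = n²(n−1)x²/((n+β+1)²(n+k)) + ((2α+2+k)n + (2α+1)k)nx/((n+β+1)²(n+k)) + (3α²+3α+1)/(3(n+β+1)²), where e₂(t) = t². -/

import Mathlib

open Finset Filter

/-- Pochhammer k-symbol: `(λ)_{m,k} = λ(λ+k)⋯(λ+(m-1)k)`. -/
noncomputable def pochK (lam k : ℝ) (m : ℕ) : ℝ :=
  ∏ i ∈ Finset.range m, (lam + i * k)

/-- Lupaş-type operator based on Polya distribution with Pochhammer k-symbol. -/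
noncomputable def LupasP (n : ℕ) (k : ℝ) (f : ℝ → ℝ) (x : ℝ) : ℝ :=
  (1 / pochK n k n) * ∑ m ∈ Finset.range (n + 1),
    (n.choose m : ℝ) * pochK (n * x) k m * pochK (n - n * x) k (n - m) * f (m / n)

/-- Kantorovich-Stancu modification of the Lupaş-type operator. -/
noncomputable def KantK (n : ℕ) (α β k : ℝ) (f : ℝ → ℝ) (x : ℝ) : ℝ :=
  ((n + β + 1) / pochK n k n) * ∑ m ∈ Finset.range (n + 1),
    (n.choose m : ℝ) * pochK (n * x) k m * pochK (n - n * x) k (n - m) *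
      ∫ t in ((m + α) / (n + β + 1))..((m + α + 1) / (n + β + 1)), f t

/-- Modulus of continuity of `f` on `[0,1]`. -/
noncomputable def modulus (f : ℝ → ℝ) (δ : ℝ) : ℝ :=
  sSup {y | ∃ x t : ℝ, x ∈ Set.Icc (0:ℝ) 1 ∧ t ∈ Set.Icc (0:ℝ) 1 ∧
    |t - x| ≤ δ ∧ y = |f t - f x|}

lemma pochK_zero (a k : ℝ) : pochK a k 0 = 1 := by simp [pochK]

lemma pochK_succ (a k : ℝ) (m : ℕ) : pochK a k (m+1) = pochK a k m * (a + m * k) := by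
  simp [pochK, Finset.prod_range_succ]

lemma pochK_succ' (a k : ℝ) (m : ℕ) : pochK a k (m+1) = a * pochK (a+k) k m := by
  rw [pochK, Finset.prod_range_succ']
  simp only [Nat.cast_zero, zero_mul, add_zero]
  rw [mul_comm, pochK]
  congr 1
  apply Finset.prod_congr rfl
  intro i _
  push_cast
  ring

lemma pochK_pos {a k : ℝ} (ha : 0 < a) (hk : 0 ≤ k) (m : ℕ) : 0 < pochK a k m := by
  apply Finset.prod_pos
  intro i _
  positivity

lemma vand (k a b : ℝ) (n : ℕ) :
    ∑ m ∈ range (n+1), (n.choose m : ℝ) * pochK a k m * pochK b k (n-m)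
      = pochK (a+b) k n := by
  induction n with
  | zero => simp [pochK]
  | succ N ih =>
    rw [Finset.sum_range_succ' _ (N+1)]
    have e0 : ((N+1).choose 0 : ℝ) * pochK a k 0 * pochK b k (N+1-0) = pochK b k (N+1) := by
      simp [pochK_zero]
    rw [e0]
    have eterm : ∀ m ∈ range (N+1),
        ((N+1).choose (m+1) : ℝ) * pochK a k (m+1) * pochK b k (N+1-(m+1))
        = (N.choose m : ℝ) * pochK a k m * pochK b k (N-m) * (a + m*k)
          + (N.choose (m+1) : ℝ) * pochK a k (m+1) * pochK b k (N-m) := by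
      intro m hm
      have h' : N+1-(m+1) = N-m := by omega
      rw [h', Nat.choose_succ_succ, pochK_succ]
      push_cast; ring
    rw [Finset.sum_congr rfl eterm, Finset.sum_add_distrib]
    have h2 : (∑ m ∈ range (N+1), (N.choose (m+1) : ℝ) * pochK a k (m+1) * pochK b k (N-m))
        + pochK b k (N+1)
        = ∑ m ∈ range (N+1), (N.choose m : ℝ) * pochK a k m * pochK b k (N-m) * (b + (N-m)*k) := by
      have h3 : ∑ m ∈ range (N+2), (N.choose m : ℝ) * pochK a k m * pochK b k (N+1-m)
          = (∑ m ∈ range (N+1), (N.choose (m+1) : ℝ) * pochK a k (m+1) * pochK b k (N-m))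
            + pochK b k (N+1) := by
        rw [Finset.sum_range_succ' _ (N+1)]
        congr 1
        · apply Finset.sum_congr rfl
          intro m hm
          have h' : N+1-(m+1) = N-m := by omega
          rw [h']
        · simp [pochK_zero]
      have h4 : ∑ m ∈ range (N+2), (N.choose m : ℝ) * pochK a k m * pochK b k (N+1-m)
          = ∑ m ∈ range (N+1), (N.choose m : ℝ) * pochK a k m * pochK b k (N-m) * (b + (N-m)*k) := by
        rw [Finset.sum_range_succ]
        simp only [Nat.choose_succ_self, Nat.cast_zero, zero_mul, add_zero]
        apply Finset.sum_congr rfl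
        intro m hm
        have h' : N+1-m = (N-m)+1 := by
          simp at hm; omega
        rw [h', pochK_succ, Nat.cast_sub (by simp at hm; omega)]
        ring
      rw [← h3, h4]
    rw [add_assoc, h2, ← Finset.sum_add_distrib]
    have h5 : ∀ m ∈ range (N+1),
        (N.choose m : ℝ) * pochK a k m * pochK b k (N-m) * (a + m*k)
          + (N.choose m : ℝ) * pochK a k m * pochK b k (N-m) * (b + (N-m)*k)
        = (N.choose m : ℝ) * pochK a k m * pochK b k (N-m) * (a + b + N*k) := by
      intro m hm
      ring
    rw [Finset.sum_congr rfl h5, ← Finset.sum_mul, ih, pochK_succ]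


lemma choose_cast (N m : ℕ) :
    ((m:ℝ)+1) * (((N+1).choose (m+1)) : ℝ) = ((N:ℝ)+1) * (N.choose m : ℝ) := by
  have hcn : (m+1) * (N+1).choose (m+1) = (N+1) * N.choose m :=
    (mul_comm _ _).trans (Nat.add_one_mul_choose_eq N m).symm
  exact_mod_cast hcn

lemma mom1 (k a b : ℝ) (n : ℕ) :
    ∑ m ∈ range (n+1), (m:ℝ) * ((n.choose m : ℝ) * pochK a k m * pochK b k (n-m))
      = n * a * pochK (a+b+k) k (n-1) := by
  cases n with
  | zero => simp
  | succ N =>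
    rw [Finset.sum_range_succ' _ (N+1)]
    simp only [Nat.cast_zero, zero_mul, add_zero]
    have eterm : ∀ m ∈ range (N+1),
        ((m+1 : ℕ):ℝ) * (((N+1).choose (m+1) : ℝ) * pochK a k (m+1) * pochK b k (N+1-(m+1)))
        = ((N:ℝ)+1) * a * ((N.choose m : ℝ) * pochK (a+k) k m * pochK b k (N-m)) := by
      intro m hm
      have h' : N+1-(m+1) = N-m := by omega
      rw [h', pochK_succ']
      push_cast
      linear_combination (a * pochK (a+k) k m * pochK b k (N-m)) * choose_cast N m
    rw [Finset.sum_congr rfl eterm, ← Finset.mul_sum, vand]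
    have harg : a + k + b = a + b + k := by ring
    rw [harg]
    have h6 : N+1-1 = N := rfl
    rw [h6]
    push_cast
    ring

lemma mom2 (k a b : ℝ) (n : ℕ) :
    ∑ m ∈ range (n+1), (m:ℝ) * ((m:ℝ)-1) * ((n.choose m : ℝ) * pochK a k m * pochK b k (n-m))
      = n * (n-1) * a * (a+k) * pochK (a+b+2*k) k (n-2) := by
  cases n with
  | zero => simp
  | succ N =>
    rw [Finset.sum_range_succ' _ (N+1)]
    simp only [Nat.cast_zero, zero_mul, add_zero, zero_sub, mul_zero]
    have eterm : ∀ m ∈ range (N+1),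
        ((m+1 : ℕ):ℝ) * (((m+1 : ℕ):ℝ)-1) * (((N+1).choose (m+1) : ℝ) * pochK a k (m+1) * pochK b k (N+1-(m+1)))
        = ((N:ℝ)+1) * a * ((m:ℝ) * ((N.choose m : ℝ) * pochK (a+k) k m * pochK b k (N-m))) := by
      intro m hm
      have h' : N+1-(m+1) = N-m := by omega
      rw [h', pochK_succ']
      push_cast
      linear_combination ((m:ℝ) * a * pochK (a+k) k m * pochK b k (N-m)) * choose_cast N m
    rw [Finset.sum_congr rfl eterm, ← Finset.mul_sum, mom1]
    have harg : a + k + b + k = a + b + 2*k := by ring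
    rw [harg]
    have h6 : N+1-2 = N-1 := rfl
    rw [h6]
    push_cast
    ring

theorem kant_e2 (n : ℕ) (hn : 0 < n) (α β k : ℝ) (hα : 0 ≤ α) (hαβ : α ≤ β) (hk : 0 ≤ k)
    (x : ℝ) (hx : x ∈ Set.Icc (0:ℝ) 1) :
    KantK n α β k (fun t => t ^ 2) x =
      n ^ 2 * (n - 1) * x ^ 2 / ((n + β + 1) ^ 2 * (n + k))
      + ((2 * α + 2 + k) * n + (2 * α + 1) * k) * n * x / ((n + β + 1) ^ 2 * (n + k))
      + (3 * α ^ 2 + 3 * α + 1) / (3 * (n + β + 1) ^ 2) := by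
  have hn1R : (1:ℝ) ≤ (n:ℝ) := by exact_mod_cast hn
  have hβ : 0 ≤ β := le_trans hα hαβ
  have hN : (0:ℝ) < (n:ℝ) + β + 1 := by linarith
  have hNne : ((n:ℝ) + β + 1) ≠ 0 := ne_of_gt hN
  have hnk : (0:ℝ) < (n:ℝ) + k := by linarith
  have hn1 : n - 1 + 1 = n := Nat.succ_pred_eq_of_pos hn
  set a : ℝ := (n:ℝ) * x with ha
  set b : ℝ := (n:ℝ) - (n:ℝ) * x with hb
  set N : ℝ := (n:ℝ) + β + 1 with hNdef
  set Q1 : ℝ := pochK ((n:ℝ) + k) k (n-1) with hQ1def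
  set Q2 : ℝ := pochK ((n:ℝ) + 2*k) k (n-2) with hQ2def
  have hQ1pos : 0 < Q1 := pochK_pos (by linarith) hk _
  have hP : pochK (n:ℝ) k n = (n:ℝ) * Q1 := by
    conv_lhs => rw [← hn1]
    rw [pochK_succ', hn1]
  have hQ : ((n:ℝ)-1) * Q1 = ((n:ℝ)-1) * (((n:ℝ)+k) * Q2) := by
    rcases Nat.lt_or_ge n 2 with h | h
    · have hn' : n = 1 := by omega
      subst hn'
      norm_num
    · have hn2 : n - 2 + 1 = n - 1 := by omega
      rw [hQ1def, ← hn2, pochK_succ']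
      have : (n:ℝ) + k + k = (n:ℝ) + 2*k := by ring
      rw [this]
  -- the integral of t^2
  have hint : ∀ m : ℕ, (∫ t in (((m:ℝ) + α) / N)..(((m:ℝ) + α + 1) / N), t^2)
      = (3*((m:ℝ)+α)^2 + 3*((m:ℝ)+α) + 1)/(3*N^3) := by
    intro m
    rw [integral_pow]
    field_simp
    have h3 : N^3 * N⁻¹^3 = 1 := by rw [← mul_pow, mul_inv_cancel₀ hNne, one_pow]
    linear_combination (18*(m:ℝ)*α+9*(m:ℝ)+9*(m:ℝ)^2+9*α+9*α^2+3) * h3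
  have hterm : ∀ m ∈ range (n+1),
      (n.choose m : ℝ) * pochK a k m * pochK b k (n-m) *
        (∫ t in (((m:ℝ) + α) / N)..(((m:ℝ) + α + 1) / N), t^2)
      = (1/(3*N^3)) * (3 * ((m:ℝ) * ((m:ℝ)-1) * ((n.choose m : ℝ) * pochK a k m * pochK b k (n-m)))
          + ((6*α+6) * ((m:ℝ) * ((n.choose m : ℝ) * pochK a k m * pochK b k (n-m)))
          + (3*α^2+3*α+1) * ((n.choose m : ℝ) * pochK a k m * pochK b k (n-m)))) := by
    intro m _
    rw [hint m]
    have hN3 : (3:ℝ)*N^3 ≠ 0 := by positivity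
    field_simp
    ring
  have hab : a + b = (n:ℝ) := by rw [ha, hb]; ring
  have hS0 := vand k a b n
  have hS1 := mom1 k a b n
  have hS2 := mom2 k a b n
  rw [hab] at hS0 hS1 hS2
  have hsum : ∑ m ∈ range (n+1), (n.choose m : ℝ) * pochK a k m * pochK b k (n-m) *
        (∫ t in (((m:ℝ) + α) / N)..(((m:ℝ) + α + 1) / N), t^2)
      = (1/(3*N^3)) * (3 * ((n:ℝ)*((n:ℝ)-1)*a*(a+k)*Q2)
          + ((6*α+6) * ((n:ℝ)*a*Q1) + (3*α^2+3*α+1) * ((n:ℝ)*Q1))) := by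
    rw [Finset.sum_congr rfl hterm, ← Finset.mul_sum]
    congr 1
    rw [Finset.sum_add_distrib, Finset.sum_add_distrib, ← Finset.mul_sum, ← Finset.mul_sum,
      ← Finset.mul_sum, hS0, hS1, hS2, hP]
  have hval : 3 * ((n:ℝ)*((n:ℝ)-1)*a*(a+k)*Q2)
        + ((6*α+6) * ((n:ℝ)*a*Q1) + (3*α^2+3*α+1) * ((n:ℝ)*Q1))
      = (3*(n:ℝ)*((n:ℝ)-1)*a*(a+k)/((n:ℝ)+k) + (6*α+6)*(n:ℝ)*a + (3*α^2+3*α+1)*(n:ℝ)) * Q1 := by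
    field_simp
    linear_combination (3*a*(a+k)) * hQ.symm
  rw [KantK]
  rw [hsum, hval, hP]
  rw [ha]
  field_simp
  ring
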